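/- Let X be a Banach space and Y a normed linear space, let θ* ∈ X and r > 0, and let T: X → Y be continuously Fréchet differentiable on the closed ball B_r(θ*). Suppose ‖∇T(θ) − ∇T(θ*)‖ ≤ ε for all θ ∈ B_r(θ*), suppose ∇T(θ*) is invertible with bounded inverse, and set μ = ‖∇T(θ*)^{-1}‖. If εμ < 1 and ‖T(θ*)‖ ≤ (1 − με)r/μ, then there exists a unique θ ∈ B_r(θ*) such that T(θ) = 0, and moreover ‖θ − θ*‖ ≤ (μ/(1 − με)) ‖T(θ*)‖. -/

import Mathlib

/-!
Writing `μ = ‖∇T(θ*)⁻¹‖`, the mean value inequality shows that on the ball `T` differs from the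
affine map `θ ↦ T(θ*) + ∇T(θ*)(θ - θ*)` by a map that is `ε`-Lipschitz. A map that approximates an
invertible linear map this well is bi-Lipschitz onto its image, with inverse Lipschitz constant
`(μ⁻¹ - ε)⁻¹ = μ / (1 - με)`, and (by the contraction principle behind the inverse function theorem)
its image of `B_r(θ*)` contains the ball of radius `(μ⁻¹ - ε) r` about `T(θ*)`, hence `0`.
-/

open Metric Set
open scoped NNReal

theorem Convex.approximatesLinearOn_of_hasFDerivWithinAt_of_norm_sub_le
    {𝕜 E F : Type*} [NontriviallyNormedField 𝕜] [IsRCLikeNormedField 𝕜]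
    [NormedAddCommGroup E] [NormedSpace ℝ E] [NormedSpace 𝕜 E]
    [NormedAddCommGroup F] [NormedSpace 𝕜 F]
    {f : E → F} {f' : E → E →L[𝕜] F} {φ : E →L[𝕜] F} {s : Set E} {c : ℝ≥0}
    (hs : Convex ℝ s) (hf : ∀ x ∈ s, HasFDerivWithinAt f (f' x) s x)
    (bound : ∀ x ∈ s, ‖f' x - φ‖ ≤ c) :
    ApproximatesLinearOn f φ s c :=
  fun _ hx _ hy => hs.norm_image_sub_le_of_norm_hasFDerivWithin_le' hf bound hy hx

theorem ApproximatesLinearOn.existsUnique_zero_mem_closedBall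
    {𝕜 E F : Type*} [NontriviallyNormedField 𝕜]
    [NormedAddCommGroup E] [NormedSpace 𝕜 E] [CompleteSpace E]
    [NormedAddCommGroup F] [NormedSpace 𝕜 F]
    {f : E → F} {f' : E ≃L[𝕜] F} {b : E} {r : ℝ} {c : ℝ≥0}
    (hf : ApproximatesLinearOn f (f' : E →L[𝕜] F) (closedBall b r) c) (hr : 0 ≤ r)
    (hc : c * ‖(f'.symm : F →L[𝕜] E)‖ < 1)
    (hb : ‖f b‖ ≤ (1 - ‖(f'.symm : F →L[𝕜] E)‖ * c) * r / ‖(f'.symm : F →L[𝕜] E)‖) :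
    ∃ x ∈ closedBall b r, f x = 0 ∧
      ‖x - b‖ ≤ ‖(f'.symm : F →L[𝕜] E)‖ / (1 - ‖(f'.symm : F →L[𝕜] E)‖ * c) * ‖f b‖ ∧
      ∀ y ∈ closedBall b r, f y = 0 → y = x := by
  rcases f'.subsingleton_or_nnnorm_symm_pos with hE | hN
  · have : Subsingleton F := (Equiv.subsingleton_congr f'.toEquiv).1 hE
    exact ⟨b, mem_closedBall_self hr, Subsingleton.elim _ _, by simp,
      fun _ _ _ => Subsingleton.elim _ _⟩
  set μ := ‖(f'.symm : F →L[𝕜] E)‖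
  set N := ‖(f'.symm : F →L[𝕜] E)‖₊
  have hNμ : (N : ℝ) = μ := coe_nnnorm _
  have hμ : 0 < μ := hNμ ▸ hN
  have hcN : c < N⁻¹ := (NNReal.lt_inv_iff_mul_lt hN.ne').2 (by exact_mod_cast hc)
  have hgap : ((N⁻¹ - c : ℝ≥0) : ℝ) = (1 - μ * c) / μ := by
    rw [NNReal.coe_sub hcN.le, NNReal.coe_inv, hNμ]
    field_simp
  have hzero : (0 : F) ∈ closedBall (f b) (((N : ℝ)⁻¹ - c) * r) := by
    rw [mem_closedBall, dist_comm, dist_zero_right, ← NNReal.coe_inv, ← NNReal.coe_sub hcN.le,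
      hgap, div_mul_eq_mul_div]
    exact hb
  obtain ⟨x, hx, hfx⟩ :=
    hf.surjOn_closedBall_of_nonlinearRightInverse f'.toNonlinearRightInverse hr Subset.rfl hzero
  refine ⟨x, hx, hfx, ?_, fun y hy hfy => hf.injOn (Or.inr hcN) hy hx (hfy.trans hfx.symm)⟩
  have hdist := (hf.antilipschitz (Or.inr hcN)).le_mul_dist ⟨x, hx⟩ ⟨b, mem_closedBall_self hr⟩
  rwa [NNReal.coe_inv, hgap, inv_div, Subtype.dist_eq, dist_eq_norm, domRestrict_apply,
    domRestrict_apply, hfx, dist_zero_left] at hdist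

theorem abstract_zero_existence
    {X Y : Type*} [NormedAddCommGroup X] [NormedSpace ℝ X] [CompleteSpace X]
    [NormedAddCommGroup Y] [NormedSpace ℝ Y]
    (T : X → Y) (T' : X → X →L[ℝ] Y) (θstar : X) (r ε : ℝ) (hr : 0 < r)
    (hdiff : ∀ θ ∈ Metric.closedBall θstar r,
      HasFDerivWithinAt T (T' θ) (Metric.closedBall θstar r) θ)
    (hε : ∀ θ ∈ Metric.closedBall θstar r, ‖T' θ - T' θstar‖ ≤ ε)
    (E : X ≃L[ℝ] Y) (hE : (E : X →L[ℝ] Y) = T' θstar)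
    (μ : ℝ) (hμ : μ = ‖(E.symm : Y →L[ℝ] X)‖)
    (hεμ : ε * μ < 1)
    (hres : ‖T θstar‖ ≤ (1 - μ * ε) * r / μ) :
    ∃ θ ∈ Metric.closedBall θstar r,
      T θ = 0 ∧
      ‖θ - θstar‖ ≤ μ / (1 - μ * ε) * ‖T θstar‖ ∧
      ∀ θ' ∈ Metric.closedBall θstar r, T θ' = 0 → θ' = θ := by
  have hε₀ : 0 ≤ ε := (norm_nonneg _).trans (hε θstar (mem_closedBall_self hr.le))
  lift ε to ℝ≥0 using hε₀
  subst hμ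
  have hT : ApproximatesLinearOn T (E : X →L[ℝ] Y) (closedBall θstar r) ε :=
    (convex_closedBall θstar r).approximatesLinearOn_of_hasFDerivWithinAt_of_norm_sub_le hdiff
      (hE ▸ hε)
  exact hT.existsUnique_zero_mem_closedBall hr.le hεμ hres
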